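/- arXiv:1911.03071 — 5 statements merged into one kernel-verified Lean document; each statement's English description precedes it below -/
import Mathlib

section
/- Let z be a random vector taking values in {−1,1}^n whose covariance matrix satisfies Cov(z) ⪯ Q. Then the covariance matrix of the covariate imbalance vector Xᵀz satisfies Cov(Xᵀz) = Xᵀ·Cov(z)·X ⪯ (ξ²/(1−φ))·H, where H = Xᵀ·(X·Xᵀ + (ξ²·φ/(1−φ))·I_n)^{−1}·X is the hat matrix of a ridge regression with regularization parameter ξ²·φ/(1−φ) and regressors Xᵀ. -/
open MeasureTheory Matrix

/-- The covariance matrix `Cov(z) = E[z zᵀ] - E[z]·E[z]ᵀ` of a random vector. -/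
noncomputable def covMatrix {Ω : Type*} [MeasurableSpace Ω] (μ : Measure Ω) {n : ℕ}
    (z : Ω → Fin n → ℝ) : Matrix (Fin n) (Fin n) ℝ :=
  Matrix.of fun i j =>
    (∫ ω, z ω i * z ω j ∂μ) - (∫ ω, z ω i ∂μ) * (∫ ω, z ω j ∂μ)

/-- If `z` takes values in `{-1,1}^n` and `Cov(z) ⪯ Q`, then the
covariance matrix of the covariate imbalance vector `Xᵀz`, namely
`Cov(Xᵀz) = Xᵀ·Cov(z)·X`, satisfies `Cov(Xᵀz) ⪯ (ξ²/(1-φ))·H`, where `H` is the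
ridge-regression hat matrix. -/
theorem gsw_covariate_balance_hat_bound
    {Ω : Type*} [MeasurableSpace Ω] (μ : Measure Ω) [IsProbabilityMeasure μ]
    {n d : ℕ} (hn : 0 < n) (hd : 0 < d)
    (X : Matrix (Fin n) (Fin d) ℝ) (ξ : ℝ) (hξpos : 0 < ξ)
    (hξ : IsGreatest {r | ∃ i : Fin n, r = Real.sqrt (∑ j, X i j ^ 2)} ξ)
    (φ : ℝ) (hφ : φ ∈ Set.Ioo (0 : ℝ) 1)
    (Q : Matrix (Fin n) (Fin n) ℝ)
    (hQ : Q = (φ • (1 : Matrix (Fin n) (Fin n) ℝ) + ((1 - φ) / ξ ^ 2) • (X * Xᵀ))⁻¹)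
    (H : Matrix (Fin d) (Fin d) ℝ)
    (hH : H = Xᵀ * (X * Xᵀ + (ξ ^ 2 * φ / (1 - φ)) • (1 : Matrix (Fin n) (Fin n) ℝ))⁻¹ * X)
    (z : Ω → Fin n → ℝ)
    (hmeas : ∀ i, Measurable fun ω => z ω i)
    (hval : ∀ ω i, z ω i = 1 ∨ z ω i = -1)
    (hcov : (Q - covMatrix μ z).PosSemidef) :
    ((ξ ^ 2 / (1 - φ)) • H - Xᵀ * covMatrix μ z * X).PosSemidef := by
  obtain ⟨hφ0, hφ1⟩ := hφ
  have h1φ : 0 < 1 - φ := by linarith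
  have hξ2 : (0:ℝ) < ξ ^ 2 := by positivity
  set M : Matrix (Fin n) (Fin n) ℝ :=
    X * Xᵀ + (ξ ^ 2 * φ / (1 - φ)) • (1 : Matrix (Fin n) (Fin n) ℝ) with hMdef
  have hXX : (X * Xᵀ).PosSemidef := by
    have := Matrix.posSemidef_self_mul_conjTranspose X
    rwa [Matrix.conjTranspose_eq_transpose_of_trivial] at this
  have hsmul : ((ξ ^ 2 * φ / (1 - φ)) • (1 : Matrix (Fin n) (Fin n) ℝ)).PosDef := by
    rw [Matrix.smul_one_eq_diagonal]
    exact Matrix.posDef_diagonal_iff.mpr fun _ => by positivity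
  have hMpd : M.PosDef := Matrix.PosDef.posSemidef_add hXX hsmul
  have hMdet : IsUnit M.det := isUnit_iff_ne_zero.mpr hMpd.det_pos.ne'
  have hc : (0:ℝ) < (1 - φ) / ξ ^ 2 := by positivity
  have hscal : φ • (1 : Matrix (Fin n) (Fin n) ℝ) + ((1 - φ) / ξ ^ 2) • (X * Xᵀ)
      = ((1 - φ) / ξ ^ 2) • M := by
    rw [hMdef, smul_add, smul_smul]
    have : (1 - φ) / ξ ^ 2 * (ξ ^ 2 * φ / (1 - φ)) = φ := by
      field_simp
    rw [this, add_comm]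
  have hQ' : Q = (ξ ^ 2 / (1 - φ)) • M⁻¹ := by
    have hinv := Matrix.inv_smul' (A := M) (Units.mk0 ((1 - φ) / ξ ^ 2) hc.ne') hMdet
    simp only [Units.smul_def, Units.val_inv_eq_inv_val, Units.val_mk0] at hinv
    rw [hQ, hscal, hinv]
    congr 1
    rw [div_eq_mul_inv, mul_inv, inv_inv, div_eq_mul_inv, mul_comm]
  have hkey : (ξ ^ 2 / (1 - φ)) • H = Xᵀ * Q * X := by
    rw [hH, hQ', Matrix.mul_smul, Matrix.smul_mul]
  rw [hkey, show Xᵀ * Q * X - Xᵀ * covMatrix μ z * X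
      = Xᵀ * (Q - covMatrix μ z) * X by
    rw [Matrix.mul_sub, Matrix.sub_mul]]
  have := hcov.conjTranspose_mul_mul_same X
  rwa [Matrix.conjTranspose_eq_transpose_of_trivial] at this
end

section
/- Let z be a random vector taking values in {−1,1}^n with E[z] = 0 whose covariance matrix satisfies Cov(z) ⪯ Q. Then for every linear function β ∈ ℝ^d, the expected squared covariate imbalance satisfies E[(βᵀ·Xᵀ·z)²] ≤ (ξ²/(1−φ))·‖β‖². -/
open MeasureTheory Matrix

/-- If `z` takes values in `{-1,1}^n`, `E[z] = 0`, and `Cov(z) ⪯ Q`,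
then for every linear function `β` the expected squared covariate imbalance satisfies
`E[(βᵀXᵀz)²] ≤ (ξ²/(1-φ))·‖β‖²`. -/
theorem gsw_worst_case_imbalance_bound
    {Ω : Type*} [MeasurableSpace Ω] (μ : Measure Ω) [IsProbabilityMeasure μ]
    {n d : ℕ} (hn : 0 < n) (hd : 0 < d)
    (X : Matrix (Fin n) (Fin d) ℝ) (ξ : ℝ) (hξpos : 0 < ξ)
    (hξ : IsGreatest {r | ∃ i : Fin n, r = Real.sqrt (∑ j, X i j ^ 2)} ξ)
    (φ : ℝ) (hφ : φ ∈ Set.Ioo (0 : ℝ) 1)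
    (Q : Matrix (Fin n) (Fin n) ℝ)
    (hQ : Q = (φ • (1 : Matrix (Fin n) (Fin n) ℝ) + ((1 - φ) / ξ ^ 2) • (X * Xᵀ))⁻¹)
    (z : Ω → Fin n → ℝ)
    (hmeas : ∀ i, Measurable fun ω => z ω i)
    (hval : ∀ ω i, z ω i = 1 ∨ z ω i = -1)
    (hmean : ∀ i, ∫ ω, z ω i ∂μ = 0)
    (hcov : (Q - covMatrix μ z).PosSemidef) :
    ∀ β : Fin d → ℝ,
      ∫ ω, (β ⬝ᵥ (Xᵀ *ᵥ z ω)) ^ 2 ∂μ ≤ (ξ ^ 2 / (1 - φ)) * ∑ j, β j ^ 2 := by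
  intro β
  obtain ⟨hφ0, hφ1⟩ := hφ
  have hξ2 : (0:ℝ) < ξ ^ 2 := by positivity
  set c : ℝ := (1 - φ) / ξ ^ 2 with hc
  have hcpos : 0 < c := div_pos (by linarith) hξ2
  set M : Matrix (Fin n) (Fin n) ℝ := φ • (1 : Matrix (Fin n) (Fin n) ℝ) + c • (X * Xᵀ)
    with hMdef
  -- quadratic form identities
  have hquad : ∀ x : Fin n → ℝ, x ⬝ᵥ ((X * Xᵀ) *ᵥ x) = (Xᵀ *ᵥ x) ⬝ᵥ (Xᵀ *ᵥ x) := fun x => by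
    rw [← mulVec_mulVec, dotProduct_mulVec, ← mulVec_transpose]
  have hMquad : ∀ x : Fin n → ℝ,
      x ⬝ᵥ (M *ᵥ x) = φ * (x ⬝ᵥ x) + c * ((Xᵀ *ᵥ x) ⬝ᵥ (Xᵀ *ᵥ x)) := fun x => by
    rw [hMdef, add_mulVec, dotProduct_add, smul_mulVec, smul_mulVec, one_mulVec,
      dotProduct_smul, dotProduct_smul, hquad, smul_eq_mul, smul_eq_mul]
  have hsq : ∀ (m : ℕ) (x : Fin m → ℝ), x ⬝ᵥ x = ∑ i, x i ^ 2 := fun m x => by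
    simp [dotProduct, sq]
  -- M is positive definite
  have hherm : M.IsHermitian := by
    have h1 : X * Xᵀ = X * Xᴴ := by rw [conjTranspose_eq_transpose_of_trivial]
    rw [hMdef, h1]
    exact (by simp [Matrix.IsHermitian, conjTranspose_smul] :
        (φ • (1 : Matrix (Fin n) (Fin n) ℝ)).IsHermitian).add
      (by simp [Matrix.IsHermitian, conjTranspose_smul,
        (isHermitian_mul_conjTranspose_self X).eq] : (c • (X * Xᴴ)).IsHermitian)
  have hMpd : M.PosDef := by
    refine posDef_iff_dotProduct_mulVec.mpr ⟨hherm, fun x hx => ?_⟩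
    have hsv : star x = x := funext fun i => rfl
    rw [hsv, hMquad]
    have h1 : 0 < x ⬝ᵥ x := by
      rw [hsq]
      obtain ⟨i, hi⟩ := Function.ne_iff.mp hx
      exact Finset.sum_pos' (fun j _ => sq_nonneg _)
        ⟨i, Finset.mem_univ i, sq_pos_of_ne_zero hi⟩
    have h2 : 0 ≤ (Xᵀ *ᵥ x) ⬝ᵥ (Xᵀ *ᵥ x) := by rw [hsq]; positivity
    nlinarith
  have hdet : IsUnit M.det := hMpd.det_pos.ne'.isUnit
  -- integrability facts
  have habs : ∀ ω i, |z ω i| = 1 := fun ω i => by rcases hval ω i with h | h <;> simp [h]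
  have hint : ∀ i j, Integrable (fun ω => z ω i * z ω j) μ := fun i j => by
    refine (integrable_const (1:ℝ)).mono'
      ((hmeas i).mul (hmeas j)).aestronglyMeasurable (ae_of_all _ fun ω => ?_)
    simp [Real.norm_eq_abs, abs_mul, habs]
  set v : Fin n → ℝ := X *ᵥ β with hv
  have hib : ∀ w : Fin n → ℝ, β ⬝ᵥ (Xᵀ *ᵥ w) = v ⬝ᵥ w := fun w => by
    rw [dotProduct_mulVec, vecMul_transpose]
  -- expectation of the square equals the quadratic form of the covariance matrix
  have hexp : ∫ ω, (v ⬝ᵥ z ω) ^ 2 ∂μ = ∑ i, ∑ j, v i * v j * ∫ ω, z ω i * z ω j ∂μ := by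
    have hpt : ∀ ω, (v ⬝ᵥ z ω) ^ 2 = ∑ i, ∑ j, v i * v j * (z ω i * z ω j) := fun ω => by
      rw [sq, dotProduct, Finset.sum_mul_sum]
      exact Finset.sum_congr rfl fun i _ => Finset.sum_congr rfl fun j _ => by ring
    simp_rw [hpt]
    rw [integral_finset_sum _
      (fun i _ => integrable_finset_sum _ (fun j _ => (hint i j).const_mul _))]
    refine Finset.sum_congr rfl fun i _ => ?_
    rw [integral_finset_sum _ (fun j _ => (hint i j).const_mul _)]
    exact Finset.sum_congr rfl fun j _ => integral_const_mul _ _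
  have hcovq : v ⬝ᵥ (covMatrix μ z *ᵥ v) = ∑ i, ∑ j, v i * v j * ∫ ω, z ω i * z ω j ∂μ := by
    simp only [covMatrix, dotProduct, mulVec, dotProduct, Matrix.of_apply, hmean, mul_zero,
      sub_zero, Finset.mul_sum]
    exact Finset.sum_congr rfl fun i _ => Finset.sum_congr rfl fun j _ => by ring
  -- covariance bound
  have hle1 : v ⬝ᵥ (covMatrix μ z *ᵥ v) ≤ v ⬝ᵥ (Q *ᵥ v) := by
    have h := hcov.dotProduct_mulVec_nonneg v
    have hsv : star v = v := funext fun i => rfl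
    rw [hsv, sub_mulVec, dotProduct_sub] at h
    linarith
  -- main linear-algebra bound: v ⬝ᵥ Q v ≤ c⁻¹ ∑ β j ^ 2
  set u : Fin n → ℝ := Q *ᵥ v with hu
  have hMu : M *ᵥ u = v := by
    rw [hu, hQ, mulVec_mulVec, mul_nonsing_inv M hdet, one_mulVec]
  set t : ℝ := v ⬝ᵥ u with ht
  have hqf : u ⬝ᵥ (M *ᵥ u) = t := by rw [hMu, dotProduct_comm, ht]
  set w : Fin d → ℝ := Xᵀ *ᵥ u with hw
  have huu : 0 ≤ u ⬝ᵥ u := by rw [hsq]; positivity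
  have hteq : t = φ * (u ⬝ᵥ u) + c * (w ⬝ᵥ w) := by rw [← hqf, hMquad, hw]
  have hcw : c * (∑ j, w j ^ 2) ≤ t := by
    rw [hteq, ← hsq]; nlinarith
  have hCS : (∑ j, w j * β j) ^ 2 ≤ (∑ j, w j ^ 2) * ∑ j, β j ^ 2 :=
    Finset.sum_mul_sq_le_sq_mul_sq Finset.univ w β
  have htw : ∑ j, w j * β j = t := by
    have : w ⬝ᵥ β = t := by rw [dotProduct_comm, hw, hib, ht]
    simpa [dotProduct] using this
  have hS : 0 ≤ ∑ j, β j ^ 2 := by positivity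
  have hfinal : t ≤ c⁻¹ * ∑ j, β j ^ 2 := by
    rcases le_or_gt t 0 with h | h
    · exact h.trans (mul_nonneg (inv_nonneg.mpr hcpos.le) hS)
    · have h3 : t ^ 2 ≤ (∑ j, w j ^ 2) * ∑ j, β j ^ 2 := by rw [← htw]; exact hCS
      have h2 : c * t ^ 2 ≤ t * ∑ j, β j ^ 2 :=
        calc c * t ^ 2 ≤ c * ((∑ j, w j ^ 2) * ∑ j, β j ^ 2) :=
              mul_le_mul_of_nonneg_left h3 hcpos.le
          _ = (c * ∑ j, w j ^ 2) * ∑ j, β j ^ 2 := by ring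
          _ ≤ t * ∑ j, β j ^ 2 := mul_le_mul_of_nonneg_right hcw hS
      have h4 : t * (c * t) ≤ t * ∑ j, β j ^ 2 :=
        calc t * (c * t) = c * t ^ 2 := by ring
          _ ≤ t * ∑ j, β j ^ 2 := h2
      have h5 : c * t ≤ ∑ j, β j ^ 2 := le_of_mul_le_mul_left h4 h
      calc t = c⁻¹ * (c * t) := by field_simp
        _ ≤ c⁻¹ * ∑ j, β j ^ 2 :=
          mul_le_mul_of_nonneg_left h5 (inv_nonneg.mpr hcpos.le)
  have hcinv : ξ ^ 2 / (1 - φ) = c⁻¹ := by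
    rw [hc]; field_simp
  calc ∫ ω, (β ⬝ᵥ (Xᵀ *ᵥ z ω)) ^ 2 ∂μ
      = ∫ ω, (v ⬝ᵥ z ω) ^ 2 ∂μ := by simp_rw [hib]
    _ = v ⬝ᵥ (covMatrix μ z *ᵥ v) := by rw [hexp, hcovq]
    _ ≤ v ⬝ᵥ (Q *ᵥ v) := hle1
    _ = t := by rw [ht, hu]
    _ ≤ c⁻¹ * ∑ j, β j ^ 2 := hfinal
    _ = ξ ^ 2 / (1 - φ) * ∑ j, β j ^ 2 := by rw [hcinv]
end

section
/- Suppose X has full column rank d (equivalently, XᵀX is invertible). Then Xᵀ·Q·X = (φ·(XᵀX)^{−1} + (1−φ)·ξ^{−2}·I_d)^{−1}; consequently, for any random vector z taking values in {−1,1}^n with Cov(z) ⪯ Q, the covariance of the covariate imbalance satisfies Cov(Xᵀz) ⪯ (φ·(XᵀX)^{−1} + (1−φ)·ξ^{−2}·I_d)^{−1}, a weighted harmonic mean of the Gram matrix XᵀX and ξ²·I_d. -/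
open MeasureTheory Matrix

lemma psd_smul' {m : ℕ} {M : Matrix (Fin m) (Fin m) ℝ} (hM : M.PosSemidef) {c : ℝ} (hc : 0 ≤ c) :
    (c • M).PosSemidef := by
  rw [Matrix.posSemidef_iff_dotProduct_mulVec]
  constructor
  · simp only [Matrix.IsHermitian, conjTranspose_smul, star_trivial, hM.1.eq]
  · intro x
    rw [smul_mulVec, dotProduct_smul]
    exact mul_nonneg hc ((Matrix.posSemidef_iff_dotProduct_mulVec.mp hM).2 x)

lemma pd_smul' {m : ℕ} {M : Matrix (Fin m) (Fin m) ℝ} (hM : M.PosDef) {c : ℝ} (hc : 0 < c) :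
    (c • M).PosDef := by
  rw [Matrix.posDef_iff_dotProduct_mulVec]
  constructor
  · simp only [Matrix.IsHermitian, conjTranspose_smul, star_trivial, hM.1.eq]
  · intro x hx
    rw [smul_mulVec, dotProduct_smul]
    exact mul_pos hc (hM.dotProduct_mulVec_pos hx)

lemma gram_posDef {n d : ℕ} (X : Matrix (Fin n) (Fin d) ℝ) (hrank : IsUnit (Xᵀ * X)) :
    (Xᵀ * X).PosDef := by
  rw [Matrix.posDef_iff_dotProduct_mulVec]
  constructor
  · simp only [Matrix.IsHermitian, conjTranspose_eq_transpose_of_trivial,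
      Matrix.transpose_mul, Matrix.transpose_transpose]
  · intro x hx
    have hXx : X *ᵥ x ≠ 0 := by
      intro h0
      have : (Xᵀ * X) *ᵥ x = 0 := by rw [← Matrix.mulVec_mulVec, h0, Matrix.mulVec_zero]
      have hinj := (Matrix.mulVec_injective_iff_isUnit.mpr hrank)
      exact hx (by simpa [Matrix.mulVec_zero] using hinj (this.trans (Matrix.mulVec_zero _).symm))
    have key : star x ⬝ᵥ (Xᵀ * X) *ᵥ x = (X *ᵥ x) ⬝ᵥ (X *ᵥ x) := by
      rw [star_trivial, ← Matrix.mulVec_mulVec, Matrix.dotProduct_mulVec, Matrix.vecMul_transpose]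
    rw [key]
    have h1 : 0 ≤ (X *ᵥ x) ⬝ᵥ (X *ᵥ x) := by
      simpa using dotProduct_star_self_nonneg (X *ᵥ x)
    rcases h1.lt_or_eq with h | h
    · exact h
    · exact absurd (dotProduct_self_eq_zero.mp h.symm) hXx

lemma gsw_aux {n d : ℕ}
    (X : Matrix (Fin n) (Fin d) ℝ) {c φ : ℝ} (hφ0 : 0 < φ) (hc : 0 < c)
    (hrank : IsUnit (Xᵀ * X)) :
    Xᵀ * (φ • (1 : Matrix (Fin n) (Fin n) ℝ) + c • (X * Xᵀ))⁻¹ * X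
      = (φ • (Xᵀ * X)⁻¹ + c • (1 : Matrix (Fin d) (Fin d) ℝ))⁻¹ := by
  have hGpsd : (Xᵀ * X).PosSemidef := (gram_posDef X hrank).posSemidef
  have hGpd := gram_posDef X hrank
  have hApd : (φ • (1 : Matrix (Fin n) (Fin n) ℝ) + c • (X * Xᵀ)).PosDef := by
    refine Matrix.PosDef.add_posSemidef (pd_smul' Matrix.PosDef.one hφ0) (psd_smul' ?_ hc.le)
    simpa [conjTranspose_eq_transpose_of_trivial] using posSemidef_self_mul_conjTranspose X
  have hDpd : (φ • (1 : Matrix (Fin d) (Fin d) ℝ) + c • (Xᵀ * X)).PosDef :=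
    Matrix.PosDef.add_posSemidef (pd_smul' Matrix.PosDef.one hφ0) (psd_smul' hGpsd hc.le)
  set A := φ • (1 : Matrix (Fin n) (Fin n) ℝ) + c • (X * Xᵀ) with hA
  set D := φ • (1 : Matrix (Fin d) (Fin d) ℝ) + c • (Xᵀ * X) with hD
  have hAX : A * X = X * D := by
    rw [hA, hD, Matrix.add_mul, Matrix.mul_add, Matrix.smul_mul, Matrix.mul_smul,
      Matrix.smul_mul, Matrix.mul_smul, Matrix.one_mul, Matrix.mul_one, Matrix.mul_assoc]
  have hDinv : D * D⁻¹ = 1 :=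
    Matrix.mul_nonsing_inv D ((Matrix.isUnit_iff_isUnit_det D).mp hDpd.isUnit)
  have hAinv : A⁻¹ * A = 1 :=
    Matrix.nonsing_inv_mul A ((Matrix.isUnit_iff_isUnit_det A).mp hApd.isUnit)
  have hGinv : (Xᵀ * X)⁻¹ * (Xᵀ * X) = 1 :=
    Matrix.nonsing_inv_mul _ ((Matrix.isUnit_iff_isUnit_det _).mp hrank)
  have hQX : A⁻¹ * X = X * D⁻¹ := by
    calc A⁻¹ * X = A⁻¹ * (X * D * D⁻¹) := by rw [Matrix.mul_assoc, hDinv, Matrix.mul_one]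
    _ = A⁻¹ * (A * X * D⁻¹) := by rw [hAX]
    _ = A⁻¹ * A * (X * D⁻¹) := by rw [Matrix.mul_assoc A X D⁻¹, ← Matrix.mul_assoc]
    _ = X * D⁻¹ := by rw [hAinv, Matrix.one_mul]
  have hXQX : Xᵀ * A⁻¹ * X = Xᵀ * X * D⁻¹ := by
    rw [Matrix.mul_assoc, hQX, ← Matrix.mul_assoc]
  rw [hXQX]
  symm
  apply Matrix.inv_eq_right_inv
  have hBG : (φ • (Xᵀ * X)⁻¹ + c • (1 : Matrix (Fin d) (Fin d) ℝ)) * (Xᵀ * X) = D := by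
    rw [Matrix.add_mul, Matrix.smul_mul, Matrix.smul_mul, hGinv, Matrix.one_mul, hD, add_comm]
  simp only [← Matrix.mul_assoc]
  rw [Matrix.mul_assoc _ Xᵀ X, hBG, hDinv]

/-- If `X` has full column rank (`XᵀX` invertible), then
`Xᵀ·Q·X = (φ·(XᵀX)⁻¹ + (1-φ)·ξ⁻²·I)⁻¹`, and consequently any random vector `z` with
values in `{-1,1}^n` and `Cov(z) ⪯ Q` satisfies
`Cov(Xᵀz) ⪯ (φ·(XᵀX)⁻¹ + (1-φ)·ξ⁻²·I)⁻¹`. -/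
theorem gsw_harmonic_mean_balance_bound
    {n d : ℕ} (hn : 0 < n) (hd : 0 < d)
    (X : Matrix (Fin n) (Fin d) ℝ) (ξ : ℝ) (hξpos : 0 < ξ)
    (hξ : IsGreatest {r | ∃ i : Fin n, r = Real.sqrt (∑ j, X i j ^ 2)} ξ)
    (φ : ℝ) (hφ : φ ∈ Set.Ioo (0 : ℝ) 1)
    (Q : Matrix (Fin n) (Fin n) ℝ)
    (hQ : Q = (φ • (1 : Matrix (Fin n) (Fin n) ℝ) + ((1 - φ) / ξ ^ 2) • (X * Xᵀ))⁻¹)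
    (hrank : IsUnit (Xᵀ * X)) :
    Xᵀ * Q * X
      = (φ • (Xᵀ * X)⁻¹ + ((1 - φ) / ξ ^ 2) • (1 : Matrix (Fin d) (Fin d) ℝ))⁻¹ ∧
    ∀ {Ω : Type} [MeasurableSpace Ω] (μ : Measure Ω), IsProbabilityMeasure μ →
      ∀ (z : Ω → Fin n → ℝ),
        (∀ i, Measurable fun ω => z ω i) →
        (∀ ω i, z ω i = 1 ∨ z ω i = -1) →
        (Q - covMatrix μ z).PosSemidef →
        ((φ • (Xᵀ * X)⁻¹ + ((1 - φ) / ξ ^ 2) • (1 : Matrix (Fin d) (Fin d) ℝ))⁻¹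
          - Xᵀ * covMatrix μ z * X).PosSemidef := by
  have hcpos : 0 < (1 - φ) / ξ ^ 2 := div_pos (by linarith [hφ.2]) (by positivity)
  have h1 : Xᵀ * Q * X
      = (φ • (Xᵀ * X)⁻¹ + ((1 - φ) / ξ ^ 2) • (1 : Matrix (Fin d) (Fin d) ℝ))⁻¹ := by
    rw [hQ]; exact gsw_aux X hφ.1 hcpos hrank
  refine ⟨h1, ?_⟩
  intro Ω _ μ _ z _ _ hpsd
  have h2 := hpsd.conjTranspose_mul_mul_same X
  rw [conjTranspose_eq_transpose_of_trivial] at h2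
  have h3 : (φ • (Xᵀ * X)⁻¹ + ((1 - φ) / ξ ^ 2) • (1 : Matrix (Fin d) (Fin d) ℝ))⁻¹
      - Xᵀ * covMatrix μ z * X = Xᵀ * (Q - covMatrix μ z) * X := by
    rw [Matrix.mul_sub, Matrix.sub_mul, ← h1]
  rw [h3]
  exact h2
end

section
/- Suppose X has full column rank d, and let λ_G denote the largest eigenvalue of the Gram matrix XᵀX. Then the largest eigenvalue of (φ·(XᵀX)^{−1} + (1−φ)·ξ^{−2}·I_d)^{−1} equals (φ/λ_G + (1−φ)/ξ²)^{−1}, and consequently any random vector z taking values in {−1,1}^n with E[z] = 0 and Cov(z) ⪯ Q satisfies, for every β ∈ ℝ^d, E[(βᵀ·Xᵀ·z)²] ≤ (φ/λ_G + (1−φ)/ξ²)^{−1}·‖β‖². -/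
open MeasureTheory Matrix

section Aux
variable {m : ℕ}

lemma aux_smul_posSemidef {A : Matrix (Fin m) (Fin m) ℝ} (hA : A.PosSemidef) {c : ℝ}
    (hc : 0 ≤ c) : (c • A).PosSemidef := by
  refine Matrix.PosSemidef.of_dotProduct_mulVec_nonneg ?_ (fun x => ?_)
  · unfold Matrix.IsHermitian
    rw [Matrix.conjTranspose_smul, hA.1.eq]
    simp
  · rw [Matrix.smul_mulVec, dotProduct_smul, smul_eq_mul]
    exact mul_nonneg hc (hA.dotProduct_mulVec_nonneg x)

lemma aux_smul_posDef {A : Matrix (Fin m) (Fin m) ℝ} (hA : A.PosDef) {c : ℝ}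
    (hc : 0 < c) : (c • A).PosDef := by
  refine Matrix.PosDef.of_dotProduct_mulVec_pos ?_ (fun x hx => ?_)
  · unfold Matrix.IsHermitian
    rw [Matrix.conjTranspose_smul, hA.1.eq]
    simp
  · rw [Matrix.smul_mulVec, dotProduct_smul, smul_eq_mul]
    exact mul_pos hc (hA.dotProduct_mulVec_pos hx)

open scoped MatrixOrder in
lemma aux_exists_conj {A : Matrix (Fin m) (Fin m) ℝ} (hA : A.PosDef) (y : Fin m → ℝ) :
    ∃ x : Fin m → ℝ, y ⬝ᵥ (A⁻¹ *ᵥ y) = x ⬝ᵥ x ∧ x ⬝ᵥ (A *ᵥ x) = y ⬝ᵥ y := by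
  have hInv : (A⁻¹).PosDef := hA.inv
  set S := CFC.sqrt (A⁻¹) with hSdef
  have hSS : S * S = A⁻¹ := CFC.sqrt_mul_sqrt_self _ hInv.posSemidef.nonneg
  have hAdet : IsUnit A.det := (Matrix.isUnit_iff_isUnit_det A).mp hA.isUnit
  have hSsymm : Sᵀ = S := by
    have := (CFC.sqrt_nonneg (A⁻¹)).posSemidef.isHermitian
    rw [← Matrix.conjTranspose_eq_transpose_of_trivial]; exact this.eq
  have hright : S * (S * A) = 1 := by
    rw [← Matrix.mul_assoc, hSS, Matrix.nonsing_inv_mul A hAdet]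
  have hSinv1 : S⁻¹ = S * A := Matrix.inv_eq_right_inv hright
  have hSdetu : IsUnit S.det := by
    have h2 : IsUnit (S.det * S.det) := by
      have h3 := congrArg Matrix.det hSS
      rw [Matrix.det_mul] at h3
      rw [h3]
      exact Matrix.isUnit_nonsing_inv_det A hAdet
    exact isUnit_of_mul_isUnit_left h2
  have hSAS : S * A * S = 1 := by
    have h4 : S * A * S = S⁻¹ * S := by rw [hSinv1]
    rw [h4, Matrix.nonsing_inv_mul S hSdetu]
  refine ⟨S *ᵥ y, ?_, ?_⟩
  · set x := S *ᵥ y with hx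
    have hvm : y ᵥ* S = x := by rw [hx, ← Matrix.vecMul_transpose, hSsymm]
    rw [← hSS, ← Matrix.mulVec_mulVec, Matrix.dotProduct_mulVec, hvm, ← hx]
  · set x := S *ᵥ y with hx
    have hvm : y ᵥ* S = x := by rw [hx, ← Matrix.vecMul_transpose, hSsymm]
    have hAx : A *ᵥ (S *ᵥ y) = (A * S) *ᵥ y := by rw [Matrix.mulVec_mulVec]
    rw [hx, hAx, Matrix.dotProduct_mulVec, ← hx, ← hvm, Matrix.vecMul_vecMul,
      ← Matrix.mul_assoc, hSAS, Matrix.vecMul_one]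

lemma aux_inv_rayleigh_le {A : Matrix (Fin m) (Fin m) ℝ} (hA : A.PosDef) {t : ℝ}
    (ht : 0 < t) (h : ∀ x : Fin m → ℝ, t * (x ⬝ᵥ x) ≤ x ⬝ᵥ (A *ᵥ x)) :
    ∀ y : Fin m → ℝ, y ⬝ᵥ (A⁻¹ *ᵥ y) ≤ t⁻¹ * (y ⬝ᵥ y) := by
  intro y
  obtain ⟨x, h1, h2⟩ := aux_exists_conj hA y
  have hb := h x
  rw [h2] at hb
  rw [h1]
  calc x ⬝ᵥ x = t⁻¹ * (t * (x ⬝ᵥ x)) := by field_simp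
    _ ≤ t⁻¹ * (y ⬝ᵥ y) := mul_le_mul_of_nonneg_left hb (le_of_lt (inv_pos.mpr ht))

lemma aux_inv_rayleigh_ge {A : Matrix (Fin m) (Fin m) ℝ} (hA : A.PosDef) {t : ℝ}
    (ht : 0 < t) (h : ∀ x : Fin m → ℝ, x ⬝ᵥ (A *ᵥ x) ≤ t * (x ⬝ᵥ x)) :
    ∀ y : Fin m → ℝ, t⁻¹ * (y ⬝ᵥ y) ≤ y ⬝ᵥ (A⁻¹ *ᵥ y) := by
  intro y
  obtain ⟨x, h1, h2⟩ := aux_exists_conj hA y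
  have hb := h x
  rw [h2] at hb
  rw [h1]
  calc t⁻¹ * (y ⬝ᵥ y) ≤ t⁻¹ * (t * (x ⬝ᵥ x)) :=
        mul_le_mul_of_nonneg_left hb (le_of_lt (inv_pos.mpr ht))
    _ = x ⬝ᵥ x := by field_simp

end Aux

/-- If `X` has full column rank and `λ_G` is the largest eigenvalue of
`XᵀX` (characterized as the maximum of the Rayleigh quotient over unit vectors), then
the largest eigenvalue of `(φ·(XᵀX)⁻¹ + (1-φ)·ξ⁻²·I)⁻¹` equals
`(φ/λ_G + (1-φ)/ξ²)⁻¹`, and any random vector `z` in `{-1,1}^n` with `E[z] = 0` and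
`Cov(z) ⪯ Q` satisfies `E[(βᵀXᵀz)²] ≤ (φ/λ_G + (1-φ)/ξ²)⁻¹·‖β‖²` for every `β`. -/
theorem gsw_sharpened_imbalance_bound
    {Ω : Type*} [MeasurableSpace Ω] (μ : Measure Ω) [IsProbabilityMeasure μ]
    {n d : ℕ} (hn : 0 < n) (hd : 0 < d)
    (X : Matrix (Fin n) (Fin d) ℝ) (ξ : ℝ) (hξpos : 0 < ξ)
    (hξ : IsGreatest {r | ∃ i : Fin n, r = Real.sqrt (∑ j, X i j ^ 2)} ξ)
    (φ : ℝ) (hφ : φ ∈ Set.Ioo (0 : ℝ) 1)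
    (Q : Matrix (Fin n) (Fin n) ℝ)
    (hQ : Q = (φ • (1 : Matrix (Fin n) (Fin n) ℝ) + ((1 - φ) / ξ ^ 2) • (X * Xᵀ))⁻¹)
    (hrank : IsUnit (Xᵀ * X))
    (lamG : ℝ)
    (hlamG : IsGreatest
      {r | ∃ β : Fin d → ℝ, ∑ j, β j ^ 2 = 1 ∧ r = β ⬝ᵥ ((Xᵀ * X) *ᵥ β)} lamG)
    (z : Ω → Fin n → ℝ)
    (hmeas : ∀ i, Measurable fun ω => z ω i)
    (hval : ∀ ω i, z ω i = 1 ∨ z ω i = -1)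
    (hmean : ∀ i, ∫ ω, z ω i ∂μ = 0)
    (hcov : (Q - covMatrix μ z).PosSemidef) :
    IsGreatest
      {r | ∃ β : Fin d → ℝ, ∑ j, β j ^ 2 = 1 ∧
        r = β ⬝ᵥ ((φ • (Xᵀ * X)⁻¹
              + ((1 - φ) / ξ ^ 2) • (1 : Matrix (Fin d) (Fin d) ℝ))⁻¹ *ᵥ β)}
      ((φ / lamG + (1 - φ) / ξ ^ 2)⁻¹) ∧
    ∀ β : Fin d → ℝ,
      ∫ ω, (β ⬝ᵥ (Xᵀ *ᵥ z ω)) ^ 2 ∂μ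
        ≤ (φ / lamG + (1 - φ) / ξ ^ 2)⁻¹ * ∑ j, β j ^ 2 := by
  obtain ⟨hφ0, hφ1⟩ := hφ
  set c : ℝ := (1 - φ) / ξ ^ 2 with hc_def
  have hc : 0 < c := div_pos (by linarith) (by positivity)
  set G : Matrix (Fin d) (Fin d) ℝ := Xᵀ * X with hG_def
  have hGpsd : G.PosSemidef := by
    have h := Matrix.posSemidef_conjTranspose_mul_self X
    rwa [Matrix.conjTranspose_eq_transpose_of_trivial] at h
  have hGdet : IsUnit G.det := (Matrix.isUnit_iff_isUnit_det G).mp hrank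
  have hGpd : G.PosDef := by
    refine Matrix.PosDef.of_dotProduct_mulVec_pos hGpsd.1 (fun x hx => ?_)
    rcases lt_or_eq_of_le (hGpsd.dotProduct_mulVec_nonneg x) with h | h
    · exact h
    · exfalso
      have h0 : G *ᵥ x = 0 := (hGpsd.dotProduct_mulVec_zero_iff x).mp h.symm
      have hx0 : x = 0 := by
        have h1 := congrArg (fun v => G⁻¹ *ᵥ v) h0
        simpa [Matrix.mulVec_mulVec, Matrix.nonsing_inv_mul G hGdet] using h1
      exact hx hx0
  have hdot_sq : ∀ β : Fin d → ℝ, β ⬝ᵥ β = ∑ j, β j ^ 2 := by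
    intro β
    simp [dotProduct, sq]
  obtain ⟨⟨β₀, hβ₀norm, hβ₀val⟩, hub⟩ := hlamG
  have hβ₀ne : β₀ ≠ 0 := by
    intro h
    rw [h] at hβ₀norm
    simp at hβ₀norm
  have hlam_pos : 0 < lamG := by
    rw [hβ₀val]
    simpa using hGpd.dotProduct_mulVec_pos hβ₀ne
  -- Rayleigh upper bound for G over all vectors
  have hG_ub : ∀ x : Fin d → ℝ, x ⬝ᵥ (G *ᵥ x) ≤ lamG * (x ⬝ᵥ x) := by
    intro x
    by_cases hx : x = 0
    · simp [hx]
    · have hxx : 0 < x ⬝ᵥ x := by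
        have h := Matrix.dotProduct_star_self_pos_iff.mpr hx
        simpa using h
      set r : ℝ := Real.sqrt (x ⬝ᵥ x) with hr_def
      have hr : 0 < r := Real.sqrt_pos.mpr hxx
      have hr2 : r ^ 2 = x ⬝ᵥ x := Real.sq_sqrt hxx.le
      have hval2 : (r⁻¹ • x) ⬝ᵥ (G *ᵥ (r⁻¹ • x)) = r⁻¹ * r⁻¹ * (x ⬝ᵥ (G *ᵥ x)) := by
        rw [Matrix.mulVec_smul, smul_dotProduct, dotProduct_smul]
        simp [smul_eq_mul]
        ring
      have hnorm2 : ∑ j, (r⁻¹ • x) j ^ 2 = 1 := by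
        have : ∑ j, (r⁻¹ • x) j ^ 2 = r⁻¹ ^ 2 * (x ⬝ᵥ x) := by
          rw [hdot_sq x, Finset.mul_sum]
          refine Finset.sum_congr rfl fun j _ => ?_
          simp [Pi.smul_apply, smul_eq_mul]
          ring
        rw [this, ← hr2]
        field_simp
      have hle : (r⁻¹ • x) ⬝ᵥ (G *ᵥ (r⁻¹ • x)) ≤ lamG := hub ⟨r⁻¹ • x, hnorm2, rfl⟩
      have h5 : x ⬝ᵥ (G *ᵥ x) = r ^ 2 * ((r⁻¹ • x) ⬝ᵥ (G *ᵥ (r⁻¹ • x))) := by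
        rw [hval2, sq]
        field_simp
      rw [h5, ← hr2]
      calc r ^ 2 * ((r⁻¹ • x) ⬝ᵥ (G *ᵥ (r⁻¹ • x))) ≤ r ^ 2 * lamG :=
            mul_le_mul_of_nonneg_left hle (sq_nonneg r)
        _ = lamG * r ^ 2 := by ring
  -- eigenvector equation for β₀
  have hpsd : (lamG • (1 : Matrix (Fin d) (Fin d) ℝ) - G).PosSemidef := by
    refine Matrix.PosSemidef.of_dotProduct_mulVec_nonneg ?_ (fun x => ?_)
    · unfold Matrix.IsHermitian
      rw [Matrix.conjTranspose_sub, Matrix.conjTranspose_smul, Matrix.conjTranspose_one,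
        hGpsd.1.eq]
      simp
    · have hexp : x ⬝ᵥ ((lamG • (1 : Matrix (Fin d) (Fin d) ℝ) - G) *ᵥ x)
          = lamG * (x ⬝ᵥ x) - x ⬝ᵥ (G *ᵥ x) := by
        rw [Matrix.sub_mulVec, dotProduct_sub, Matrix.smul_mulVec,
          Matrix.one_mulVec, dotProduct_smul, smul_eq_mul]
      simp only [star_trivial]
      rw [hexp]
      linarith [hG_ub x]
  have heig : G *ᵥ β₀ = lamG • β₀ := by
    have h0 : star β₀ ⬝ᵥ ((lamG • (1 : Matrix (Fin d) (Fin d) ℝ) - G) *ᵥ β₀) = 0 := by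
      simp only [star_trivial]
      rw [Matrix.sub_mulVec, dotProduct_sub, Matrix.smul_mulVec,
        Matrix.one_mulVec, dotProduct_smul, smul_eq_mul, hdot_sq, hβ₀norm,
        ← hβ₀val]
      ring
    have h1 := (hpsd.dotProduct_mulVec_zero_iff β₀).mp h0
    rw [Matrix.sub_mulVec, Matrix.smul_mulVec, Matrix.one_mulVec, sub_eq_zero] at h1
    exact h1.symm
  have hGinv_eig : G⁻¹ *ᵥ β₀ = lamG⁻¹ • β₀ := by
    have h1 : G⁻¹ *ᵥ (G *ᵥ β₀) = β₀ := by
      rw [Matrix.mulVec_mulVec, Matrix.nonsing_inv_mul G hGdet, Matrix.one_mulVec]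
    rw [heig, Matrix.mulVec_smul] at h1
    calc G⁻¹ *ᵥ β₀ = lamG⁻¹ • (lamG • (G⁻¹ *ᵥ β₀)) := by
          rw [smul_smul, inv_mul_cancel₀ hlam_pos.ne', one_smul]
      _ = lamG⁻¹ • β₀ := by rw [h1]
  set M : Matrix (Fin d) (Fin d) ℝ :=
    φ • G⁻¹ + c • (1 : Matrix (Fin d) (Fin d) ℝ) with hM_def
  have hMpd : M.PosDef :=
    Matrix.PosDef.add_posSemidef (aux_smul_posDef hGpd.inv hφ0)
      (aux_smul_posSemidef Matrix.PosSemidef.one hc.le)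
  have hMdet : IsUnit M.det := (Matrix.isUnit_iff_isUnit_det M).mp hMpd.isUnit
  set t : ℝ := φ / lamG + c with ht_def
  have ht : 0 < t := add_pos (div_pos hφ0 hlam_pos) hc
  have hGinv_lb : ∀ y : Fin d → ℝ, lamG⁻¹ * (y ⬝ᵥ y) ≤ y ⬝ᵥ (G⁻¹ *ᵥ y) :=
    aux_inv_rayleigh_ge hGpd hlam_pos hG_ub
  have hM_lb : ∀ x : Fin d → ℝ, t * (x ⬝ᵥ x) ≤ x ⬝ᵥ (M *ᵥ x) := by
    intro x
    have hexp : x ⬝ᵥ (M *ᵥ x) = φ * (x ⬝ᵥ (G⁻¹ *ᵥ x)) + c * (x ⬝ᵥ x) := by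
      rw [hM_def, Matrix.add_mulVec, dotProduct_add, Matrix.smul_mulVec,
        Matrix.smul_mulVec, Matrix.one_mulVec, dotProduct_smul,
        dotProduct_smul, smul_eq_mul, smul_eq_mul]
    rw [hexp, ht_def, add_mul]
    have h1 : φ / lamG * (x ⬝ᵥ x) ≤ φ * (x ⬝ᵥ (G⁻¹ *ᵥ x)) := by
      have h2 := mul_le_mul_of_nonneg_left (hGinv_lb x) hφ0.le
      calc φ / lamG * (x ⬝ᵥ x) = φ * (lamG⁻¹ * (x ⬝ᵥ x)) := by ring
        _ ≤ φ * (x ⬝ᵥ (G⁻¹ *ᵥ x)) := h2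
    linarith
  have hMinv_ub : ∀ y : Fin d → ℝ, y ⬝ᵥ (M⁻¹ *ᵥ y) ≤ t⁻¹ * (y ⬝ᵥ y) :=
    aux_inv_rayleigh_le hMpd ht hM_lb
  -- membership value
  have hMβ₀ : M *ᵥ β₀ = t • β₀ := by
    rw [hM_def, Matrix.add_mulVec, Matrix.smul_mulVec, Matrix.smul_mulVec,
      Matrix.one_mulVec, hGinv_eig, smul_smul, ht_def, ← add_smul, div_eq_mul_inv]
  have hMinvβ₀ : M⁻¹ *ᵥ β₀ = t⁻¹ • β₀ := by
    have h1 : M⁻¹ *ᵥ (M *ᵥ β₀) = β₀ := by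
      rw [Matrix.mulVec_mulVec, Matrix.nonsing_inv_mul M hMdet, Matrix.one_mulVec]
    rw [hMβ₀, Matrix.mulVec_smul] at h1
    calc M⁻¹ *ᵥ β₀ = t⁻¹ • (t • (M⁻¹ *ᵥ β₀)) := by
          rw [smul_smul, inv_mul_cancel₀ ht.ne', one_smul]
      _ = t⁻¹ • β₀ := by rw [h1]
  have hmemval : β₀ ⬝ᵥ (M⁻¹ *ᵥ β₀) = t⁻¹ := by
    rw [hMinvβ₀, dotProduct_smul, smul_eq_mul, hdot_sq, hβ₀norm, mul_one]
  refine ⟨⟨⟨β₀, hβ₀norm, hmemval.symm⟩, ?_⟩, ?_⟩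
  · rintro r ⟨β, hβnorm, rfl⟩
    have h1 := hMinv_ub β
    rwa [hdot_sq, hβnorm, mul_one] at h1
  -- second part
  intro β
  set v : Fin n → ℝ := X *ᵥ β with hv
  set C : Matrix (Fin n) (Fin n) ℝ := covMatrix μ z with hCdef
  have hrew : ∀ ω, β ⬝ᵥ (Xᵀ *ᵥ z ω) = v ⬝ᵥ z ω := by
    intro ω
    rw [Matrix.dotProduct_mulVec, Matrix.vecMul_transpose, hv]
  have hzint : ∀ i j : Fin n, Integrable (fun ω => z ω i * z ω j) μ := by
    intro i j
    apply Integrable.mono' (integrable_const (1 : ℝ))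
      (((hmeas i).mul (hmeas j)).aestronglyMeasurable)
    filter_upwards with ω
    rcases hval ω i with h | h <;> rcases hval ω j with h' | h' <;> simp [h, h']
  have hCij : ∀ i j, C i j = ∫ ω, z ω i * z ω j ∂μ := by
    intro i j
    simp [hCdef, covMatrix, hmean]
  have hInt : ∫ ω, (v ⬝ᵥ z ω) ^ 2 ∂μ = ∑ i, ∑ j, v i * v j * C i j := by
    have hfun : ∀ ω, (v ⬝ᵥ z ω) ^ 2 = ∑ i, ∑ j, v i * v j * (z ω i * z ω j) := by
      intro ω
      rw [sq, dotProduct, Finset.sum_mul_sum]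
      exact Finset.sum_congr rfl fun i _ => Finset.sum_congr rfl fun j _ => by ring
    simp_rw [hfun]
    rw [integral_finset_sum _ (fun i _ =>
      integrable_finset_sum _ (fun j _ => (hzint i j).const_mul _))]
    refine Finset.sum_congr rfl fun i _ => ?_
    rw [integral_finset_sum _ (fun j _ => (hzint i j).const_mul _)]
    refine Finset.sum_congr rfl fun j _ => ?_
    rw [integral_const_mul, hCij]
  have hquad : ∑ i, ∑ j, v i * v j * C i j = v ⬝ᵥ (C *ᵥ v) := by
    simp only [dotProduct, Matrix.mulVec, Finset.mul_sum]
    exact Finset.sum_congr rfl fun i _ => Finset.sum_congr rfl fun j _ => by ring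
  have hCle : v ⬝ᵥ (C *ᵥ v) ≤ v ⬝ᵥ (Q *ᵥ v) := by
    have h1 := hcov.dotProduct_mulVec_nonneg v
    simp only [star_trivial] at h1
    rw [Matrix.sub_mulVec, dotProduct_sub] at h1
    linarith
  -- the conjugation identity XᵀQX = M⁻¹
  set N : Matrix (Fin n) (Fin n) ℝ :=
    φ • (1 : Matrix (Fin n) (Fin n) ℝ) + c • (X * Xᵀ) with hN_def
  have hXXt : (X * Xᵀ).PosSemidef := by
    have h := Matrix.posSemidef_self_mul_conjTranspose X
    rwa [Matrix.conjTranspose_eq_transpose_of_trivial] at h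
  have hNpd : N.PosDef :=
    Matrix.PosDef.add_posSemidef (aux_smul_posDef Matrix.PosDef.one hφ0)
      (aux_smul_posSemidef hXXt hc.le)
  have hNdet : IsUnit N.det := (Matrix.isUnit_iff_isUnit_det N).mp hNpd.isUnit
  set K : Matrix (Fin d) (Fin d) ℝ :=
    φ • (1 : Matrix (Fin d) (Fin d) ℝ) + c • G with hK_def
  have hKpd : K.PosDef :=
    Matrix.PosDef.add_posSemidef (aux_smul_posDef Matrix.PosDef.one hφ0)
      (aux_smul_posSemidef hGpsd hc.le)
  have hKdet : IsUnit K.det := (Matrix.isUnit_iff_isUnit_det K).mp hKpd.isUnit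
  have hNX : N * X = X * K := by
    rw [hN_def, hK_def, Matrix.add_mul, Matrix.mul_add, Matrix.smul_mul, Matrix.smul_mul,
      Matrix.mul_smul, Matrix.mul_smul, Matrix.one_mul, Matrix.mul_one, hG_def,
      Matrix.mul_assoc]
  have hQX : Q * X = X * K⁻¹ := by
    rw [hQ]
    calc N⁻¹ * X = N⁻¹ * ((X * K) * K⁻¹) := by
          rw [Matrix.mul_assoc X K, Matrix.mul_nonsing_inv K hKdet, Matrix.mul_one]
      _ = N⁻¹ * ((N * X) * K⁻¹) := by rw [hNX]
      _ = (N⁻¹ * N) * (X * K⁻¹) := by simp only [Matrix.mul_assoc]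
      _ = X * K⁻¹ := by rw [Matrix.nonsing_inv_mul N hNdet, Matrix.one_mul]
  have hGK : G * K = K * G := by
    rw [hK_def, Matrix.mul_add, Matrix.add_mul, Matrix.mul_smul, Matrix.smul_mul,
      Matrix.mul_one, Matrix.one_mul, Matrix.mul_smul, Matrix.smul_mul]
  have hMK : M = G⁻¹ * K := by
    rw [hM_def, hK_def, Matrix.mul_add, Matrix.mul_smul, Matrix.mul_smul, Matrix.mul_one,
      Matrix.nonsing_inv_mul G hGdet]
  have hMinv : M⁻¹ = G * K⁻¹ := by
    rw [hMK, Matrix.mul_inv_rev, Matrix.nonsing_inv_nonsing_inv G hGdet]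
    calc K⁻¹ * G = K⁻¹ * G * (K * K⁻¹) := by
          rw [Matrix.mul_nonsing_inv K hKdet, Matrix.mul_one]
      _ = K⁻¹ * (G * K) * K⁻¹ := by simp only [Matrix.mul_assoc]
      _ = K⁻¹ * (K * G) * K⁻¹ := by rw [hGK]
      _ = (K⁻¹ * K) * (G * K⁻¹) := by simp only [Matrix.mul_assoc]
      _ = G * K⁻¹ := by rw [Matrix.nonsing_inv_mul K hKdet, Matrix.one_mul]
  have hXtQX : Xᵀ * (Q * X) = M⁻¹ := by
    rw [hQX, ← Matrix.mul_assoc, ← hG_def, hMinv]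
  have hvQv : v ⬝ᵥ (Q *ᵥ v) = β ⬝ᵥ (M⁻¹ *ᵥ β) := by
    have hMinvsymm : (M⁻¹)ᵀ = M⁻¹ := by
      have h := hMpd.inv.isHermitian
      rw [← Matrix.conjTranspose_eq_transpose_of_trivial]; exact h.eq
    have hswap : β ᵥ* M⁻¹ = M⁻¹ *ᵥ β := by
      rw [← hMinvsymm, Matrix.vecMul_transpose, hMinvsymm]
    rw [hv, Matrix.mulVec_mulVec, Matrix.dotProduct_mulVec, ← Matrix.vecMul_transpose,
      Matrix.vecMul_vecMul, hXtQX, hswap, dotProduct_comm]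
  calc ∫ ω, (β ⬝ᵥ (Xᵀ *ᵥ z ω)) ^ 2 ∂μ = ∫ ω, (v ⬝ᵥ z ω) ^ 2 ∂μ := by simp_rw [hrew]
    _ = v ⬝ᵥ (C *ᵥ v) := by rw [hInt, hquad]
    _ ≤ v ⬝ᵥ (Q *ᵥ v) := hCle
    _ = β ⬝ᵥ (M⁻¹ *ᵥ β) := hvQv
    _ ≤ t⁻¹ * (β ⬝ᵥ β) := hMinv_ub β
    _ = t⁻¹ * ∑ j, β j ^ 2 := by rw [hdot_sq]
end

section
/- Let k ≥ 3 be an odd integer, d a positive integer, n = d·k, and let v_1,…,v_d be orthonormal vectors in ℝ^d. Let X be the n×d matrix whose i-th row is v_⌈i/k⌉ (so each v_ℓ appears as a row exactly k times); then ξ = max_i ‖x_i‖ = 1 and the largest eigenvalue of XᵀX is λ_G = k. Let φ ∈ (0,1) and let z be any random vector taking values in {−1,1}^n with P(z_i = 1) = 1/2 for every i. If the largest eigenvalue of Cov(Xᵀz) is at most (φ/k + (1−φ))^{−1}, then the largest eigenvalue of Cov(z) is at least (1 + k·(1−φ))/(φ + k·(1−φ)). -/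
open MeasureTheory Matrix

/-- Balance–robustness trade-off lower bound. With `n = d·k` units in
`d` groups of odd size `k ≥ 3`, each group sharing one of `d` orthonormal covariate
vectors `v₁,…,v_d` as its covariate row, every row of `X` has norm `1` (so `ξ = 1`)
and the largest eigenvalue of `XᵀX` is `k`. For any design with
`P(zᵢ = 1) = 1/2` for all `i`: if the largest eigenvalue of `Cov(Xᵀz)` is at most
`(φ/k + (1-φ))⁻¹`, then the largest eigenvalue of `Cov(z)` is at least
`(1 + k·(1-φ))/(φ + k·(1-φ))`.  Largest eigenvalues of these symmetric PSD matrices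
are expressed via Rayleigh quotients over unit vectors. -/
theorem gsw_balance_robustness_frontier
    {Ω : Type*} [MeasurableSpace Ω] (μ : Measure Ω) [IsProbabilityMeasure μ]
    {k d n : ℕ} (hk : 3 ≤ k) (hkodd : Odd k) (hd : 0 < d) (hn : n = d * k)
    (v : Fin d → Fin d → ℝ)
    (hv : ∀ l m : Fin d, ∑ j, v l j * v m j = if l = m then 1 else 0)
    (g : Fin n → Fin d) (hg : ∀ i : Fin n, (g i : ℕ) = (i : ℕ) / k)
    (X : Matrix (Fin n) (Fin d) ℝ) (hX : ∀ i j, X i j = v (g i) j)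
    (φ : ℝ) (hφ : φ ∈ Set.Ioo (0 : ℝ) 1)
    (z : Ω → Fin n → ℝ)
    (hmeas : ∀ i, Measurable fun ω => z ω i)
    (hval : ∀ ω i, z ω i = 1 ∨ z ω i = -1)
    (hhalf : ∀ i, μ {ω | z ω i = 1} = 1 / 2) :
    (∀ i : Fin n, ∑ j, X i j ^ 2 = 1) ∧
    IsGreatest
      {r | ∃ β : Fin d → ℝ, ∑ j, β j ^ 2 = 1 ∧ r = β ⬝ᵥ ((Xᵀ * X) *ᵥ β)} (k : ℝ) ∧
    ((∀ β : Fin d → ℝ, ∑ j, β j ^ 2 = 1 →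
        β ⬝ᵥ ((Xᵀ * covMatrix μ z * X) *ᵥ β) ≤ (φ / k + (1 - φ))⁻¹) →
      ∃ u : Fin n → ℝ, ∑ i, u i ^ 2 = 1 ∧
        u ⬝ᵥ (covMatrix μ z *ᵥ u) ≥ (1 + k * (1 - φ)) / (φ + k * (1 - φ))) := by
  subst hn
  obtain ⟨hφ0, hφ1⟩ := hφ
  have hk0 : 0 < k := by omega
  have hkR : (0:ℝ) < (k:ℝ) := by exact_mod_cast hk0
  have hkne : (k:ℝ) ≠ 0 := ne_of_gt hkR
  set l0 : Fin d := ⟨0, hd⟩ with hl0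
  set a : Fin (d * k) → ℝ := fun i => if g i = l0 then 1 else 0 with ha_def
  -- group structure via the product equivalence
  have hge : ∀ p : Fin d × Fin k, g (finProdFinEquiv p) = p.1 := by
    intro p
    apply Fin.ext
    rw [hg]
    show ((p.2 : ℕ) + k * (p.1 : ℕ)) / k = (p.1 : ℕ)
    rw [Nat.add_mul_div_left _ _ hk0, Nat.div_eq_of_lt p.2.2, Nat.zero_add]
  have hsum : ∀ F : Fin d → ℝ, ∑ i : Fin (d * k), F (g i) = ∑ l : Fin d, (k:ℝ) * F l := by
    intro F
    rw [← Equiv.sum_comp finProdFinEquiv (fun i => F (g i))]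
    rw [Fintype.sum_prod_type]
    simp only [hge]
    simp [Finset.sum_const, nsmul_eq_mul]
  have hsum_a : ∑ i, a i = (k:ℝ) := by
    calc ∑ i, a i = ∑ l : Fin d, (k:ℝ) * (if l = l0 then 1 else 0) :=
          hsum fun l => if l = l0 then 1 else 0
      _ = (k:ℝ) := by simp
  -- quadratic-form reductions
  have hquad : ∀ (M : Matrix (Fin (d*k)) (Fin (d*k)) ℝ) (β : Fin d → ℝ),
      β ⬝ᵥ ((Xᵀ * M * X) *ᵥ β) = (X *ᵥ β) ⬝ᵥ (M *ᵥ (X *ᵥ β)) := by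
    intro M β
    rw [Matrix.mul_assoc, ← Matrix.mulVec_mulVec, Matrix.dotProduct_mulVec,
      Matrix.vecMul_transpose, ← Matrix.mulVec_mulVec]
  have hquad1 : ∀ β : Fin d → ℝ,
      β ⬝ᵥ ((Xᵀ * X) *ᵥ β) = (X *ᵥ β) ⬝ᵥ (X *ᵥ β) := by
    intro β
    rw [← Matrix.mulVec_mulVec, Matrix.dotProduct_mulVec, Matrix.vecMul_transpose]
  -- Parseval for the orthonormal system v
  have hpars : ∀ β : Fin d → ℝ,
      ∑ l, (∑ j, v l j * β j) * (∑ j, v l j * β j) = ∑ j, β j * β j := by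
    intro β
    set W : Matrix (Fin d) (Fin d) ℝ := Matrix.of v with hW
    have hWWt : W * Wᵀ = 1 := by
      ext l m
      simp [hW, Matrix.mul_apply, Matrix.one_apply, hv]
    have hWtW : Wᵀ * W = 1 := mul_eq_one_comm.mp hWWt
    have h1 : ∑ l, (∑ j, v l j * β j) * (∑ j, v l j * β j) = (W *ᵥ β) ⬝ᵥ (W *ᵥ β) := rfl
    rw [h1, Matrix.dotProduct_mulVec (W *ᵥ β) W β, ← Matrix.mulVec_transpose,
      Matrix.mulVec_mulVec, hWtW, Matrix.one_mulVec]
    rfl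
  have hXv : ∀ (β : Fin d → ℝ) i, (X *ᵥ β) i = ∑ j, v (g i) j * β j := by
    intro β i
    simp [Matrix.mulVec, dotProduct, hX]
  have hXX : ∀ β : Fin d → ℝ, β ⬝ᵥ ((Xᵀ * X) *ᵥ β) = (k:ℝ) * ∑ j, β j ^ 2 := by
    intro β
    rw [hquad1]
    calc (X *ᵥ β) ⬝ᵥ (X *ᵥ β)
        = ∑ i : Fin (d*k), (∑ j, v (g i) j * β j) * (∑ j, v (g i) j * β j) := by
          simp only [dotProduct, hXv]
      _ = ∑ l : Fin d, (k:ℝ) * ((∑ j, v l j * β j) * (∑ j, v l j * β j)) :=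
          hsum fun l => (∑ j, v l j * β j) * (∑ j, v l j * β j)
      _ = (k:ℝ) * ∑ j, β j ^ 2 := by
          rw [← Finset.mul_sum, hpars]
          congr 1
          exact Finset.sum_congr rfl fun j _ => (pow_two (β j)).symm
  -- Part 1
  refine ⟨?_, ⟨?_, ?_⟩, ?_⟩
  · intro i
    have := hv (g i) (g i)
    simp only [if_pos rfl] at this
    calc ∑ j, X i j ^ 2 = ∑ j, v (g i) j * v (g i) j := by
          refine Finset.sum_congr rfl fun j _ => ?_
          rw [hX, pow_two]
      _ = 1 := this
  -- Part 2: membership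
  · refine ⟨fun j => if j = l0 then 1 else 0, ?_, ?_⟩
    · simp
    · rw [hXX]
      simp
  -- Part 2: upper bound
  · rintro r ⟨β, hβ, rfl⟩
    rw [hXX, hβ, mul_one]
  -- Part 3
  · intro h
    set A := covMatrix μ z with hA
    -- integrability and moments
    have habs : ∀ ω i, |z ω i| = 1 := by
      intro ω i
      rcases hval ω i with h1 | h1 <;> rw [h1] <;> norm_num
    have hz1 : ∀ ω i, z ω i * z ω i = 1 := by
      intro ω i
      rcases hval ω i with h1 | h1 <;> rw [h1] <;> norm_num
    have hmean : ∀ i, ∫ ω, z ω i ∂μ = 0 := by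
      intro i
      have hms : MeasurableSet {ω | z ω i = 1} := hmeas i (measurableSet_singleton 1)
      have hrep : (fun ω => z ω i)
          = fun ω => 2 * Set.indicator {ω | z ω i = 1} (fun _ => (1:ℝ)) ω - 1 := by
        funext ω
        rcases hval ω i with h1 | h1 <;>
          simp [Set.indicator_apply, Set.mem_setOf_eq, h1] <;> norm_num
      rw [hrep]
      have hind : Integrable (fun ω => Set.indicator {ω | z ω i = 1} (fun _ => (1:ℝ)) ω) μ :=
        (integrable_const (1:ℝ)).indicator hms
      rw [integral_sub (hind.const_mul 2) (integrable_const 1)]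
      rw [integral_const_mul 2, MeasureTheory.integral_indicator_const (1:ℝ) hms, measureReal_def, hhalf i]
      simp
    have hdiag : ∀ i, ∫ ω, z ω i * z ω i ∂μ = 1 := by
      intro i
      simp only [hz1]
      simp
    have hAij : ∀ i j, A i j = ∫ ω, z ω i * z ω j ∂μ := by
      intro i j
      show covMatrix μ z i j = _
      simp [covMatrix, hmean i, hmean j]
    have hAii : ∀ i, A i i = 1 := fun i => by rw [hAij, hdiag]
    have hAsymm : ∀ i j, A i j = A j i := by
      intro i j
      rw [hAij, hAij]
      simp_rw [mul_comm]
    -- the group-indicator vector and the bound S ≤ B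
    have hWa : X *ᵥ v l0 = a := by
      funext i
      rw [hXv]
      exact hv (g i) l0
    set S : ℝ := a ⬝ᵥ (A *ᵥ a) with hS_def
    have hunit : ∑ j, v l0 j ^ 2 = 1 := by
      have := hv l0 l0
      simp only [if_pos rfl] at this
      calc ∑ j, v l0 j ^ 2 = ∑ j, v l0 j * v l0 j :=
            Finset.sum_congr rfl fun j _ => pow_two _
        _ = 1 := this
    have hSB : S ≤ (φ / k + (1 - φ))⁻¹ := by
      have := h (v l0) hunit
      rwa [hquad A (v l0), hWa] at this
    -- arithmetic preliminaries
    set C : ℝ := φ + (k:ℝ) * (1 - φ) with hC_def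
    have hC0 : 0 < C := by
      have : 0 ≤ (k:ℝ) * (1 - φ) := mul_nonneg (le_of_lt hkR) (by linarith)
      linarith
    have hCne : C ≠ 0 := ne_of_gt hC0
    have hBval : (φ / k + (1 - φ))⁻¹ = (k:ℝ) / C := by
      have h1 : φ / (k:ℝ) + (1 - φ) = C / (k:ℝ) := by
        rw [hC_def]
        field_simp
      rw [h1, inv_div]
    set t : ℝ := (1 + (k:ℝ) * (1 - φ)) / C with ht_def
    set c : ℝ := 1 / (k:ℝ) with hc_def
    have hck : c * (k:ℝ) = 1 := by rw [hc_def, one_div, inv_mul_cancel₀ hkne]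
    have hc0 : 0 < c := by positivity
    -- key identity: k - c * (k/C) = t * (k - 1)
    have hkey : (k:ℝ) - c * ((k:ℝ)/C) = t * ((k:ℝ) - 1) := by
      rw [ht_def, hC_def, hc_def]
      field_simp
      ring
    -- the vectors w i
    set e : Fin (d*k) → Fin (d*k) → ℝ := fun i j => if j = i then 1 else 0 with he_def
    set w : Fin (d*k) → Fin (d*k) → ℝ := fun i => e i - c • a with hw_def
    set q : Fin (d*k) → ℝ := fun i => (w i) ⬝ᵥ (A *ᵥ (w i)) with hq_def
    have hedot : ∀ (i : Fin (d*k)) (y : Fin (d*k) → ℝ), e i ⬝ᵥ y = y i := by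
      intro i y
      simp only [he_def, dotProduct, ite_mul, one_mul, zero_mul,
        Finset.sum_ite_eq', Finset.mem_univ, if_true]
    have hAe : ∀ i : Fin (d*k), (A *ᵥ e i) = fun j => A j i := by
      intro i
      funext j
      simp [he_def, Matrix.mulVec, dotProduct]
    have haA : ∀ i : Fin (d*k), a ⬝ᵥ (A *ᵥ e i) = (A *ᵥ a) i := by
      intro i
      rw [hAe]
      simp only [dotProduct, Matrix.mulVec]
      refine Finset.sum_congr rfl fun j _ => ?_
      rw [hAsymm i j]
      ring
    have hq_eval : ∀ i : Fin (d*k), q i = A i i - 2 * c * ((A *ᵥ a) i) + c^2 * S := by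
      intro i
      show (e i - c • a) ⬝ᵥ (A *ᵥ (e i - c • a)) = _
      rw [Matrix.mulVec_sub, Matrix.mulVec_smul, dotProduct_sub,
        sub_dotProduct, sub_dotProduct, dotProduct_smul,
        dotProduct_smul, smul_dotProduct, smul_dotProduct]
      rw [hedot i (A *ᵥ e i), hedot i (A *ᵥ a), haA i]
      have : A i i = (A *ᵥ e i) i := by rw [hAe]
      rw [← this]
      show A i i - c * (A *ᵥ a) i - (c * (A *ᵥ a) i - c * (c * S)) = _
      ring
    have hsumq : ∑ i, a i * q i = (k:ℝ) - c * S := by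
      have h1 : ∀ i, a i * q i = a i - 2 * c * (a i * (A *ᵥ a) i) + c^2 * S * a i := by
        intro i
        rw [hq_eval i, hAii i]
        ring
      rw [Finset.sum_congr rfl fun i _ => h1 i]
      rw [Finset.sum_add_distrib, Finset.sum_sub_distrib, ← Finset.mul_sum, ← Finset.mul_sum]
      have h2 : ∑ i, a i * (A *ᵥ a) i = S := rfl
      rw [h2, hsum_a]
      linear_combination (c * S) * hck
    -- norms of the w i
    have hasq : ∀ j, a j * a j = a j := by
      intro j
      by_cases hj : g j = l0 <;> simp [ha_def, hj]
    have hnormw : ∀ i : Fin (d*k), a i = 1 → ∑ j, w i j * w i j = 1 - c := by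
      intro i hai
      have hexp : ∀ j, w i j * w i j
          = e i j * e i j - 2 * c * (e i j * a j) + c^2 * (a j * a j) := by
        intro j
        show (e i j - c * a j) * (e i j - c * a j) = _
        ring
      rw [Finset.sum_congr rfl fun j _ => hexp j]
      rw [Finset.sum_add_distrib, Finset.sum_sub_distrib, ← Finset.mul_sum, ← Finset.mul_sum]
      have h1 : ∑ j, e i j * e i j = 1 := by simp [he_def]
      have h2 : ∑ j, e i j * a j = 1 := by
        simp only [he_def, ite_mul, one_mul, zero_mul]
        rw [Finset.sum_ite_eq' Finset.univ i a]
        simp [hai]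
      have h3 : ∑ j, a j * a j = (k:ℝ) := by
        rw [Finset.sum_congr rfl fun j _ => hasq j, hsum_a]
      rw [h1, h2, h3]
      linear_combination c * hck
    -- pigeonhole: some i in the group has large Rayleigh quotient
    have hSB' : S ≤ (k:ℝ) / C := hBval ▸ hSB
    have hlow : t * ((k:ℝ) - 1) ≤ ∑ i, a i * q i := by
      rw [hsumq, ← hkey]
      have : c * S ≤ c * ((k:ℝ)/C) := mul_le_mul_of_nonneg_left hSB' (le_of_lt hc0)
      linarith
    have hex : ∃ i : Fin (d*k), a i = 1 ∧ t * (1 - c) ≤ q i := by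
      by_contra hno
      push_neg at hno
      set i0 : Fin (d*k) := finProdFinEquiv (l0, ⟨0, hk0⟩) with hi0
      have hai0 : a i0 = 1 := by
        simp [ha_def, hi0, hge]
      have hstep : ∀ i, a i * q i ≤ a i * (t * (1 - c)) := by
        intro i
        by_cases hi : g i = l0
        · have hai : a i = 1 := by simp [ha_def, hi]
          rw [hai, one_mul, one_mul]
          exact le_of_lt (hno i hai)
        · have hai : a i = 0 := by simp [ha_def, hi]
          rw [hai, zero_mul, zero_mul]
      have hstrict : ∑ i, a i * q i < ∑ i, a i * (t * (1 - c)) := by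
        refine Finset.sum_lt_sum (fun i _ => hstep i) ⟨i0, Finset.mem_univ i0, ?_⟩
        rw [hai0, one_mul, one_mul]
        exact hno i0 hai0
      have hrhs : ∑ i, a i * (t * (1 - c)) = t * ((k:ℝ) - 1) := by
        rw [← Finset.sum_mul, hsum_a]
        linear_combination (-t) * hck
      rw [hrhs] at hstrict
      linarith
    obtain ⟨i, hai, hqi⟩ := hex
    -- build the unit vector u
    have hk1 : (0:ℝ) < (k:ℝ) - 1 := by
      have : (3:ℝ) ≤ (k:ℝ) := by exact_mod_cast hk
      linarith
    set r : ℝ := Real.sqrt ((k:ℝ) / ((k:ℝ) - 1)) with hr_def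
    have hr2 : r * r = (k:ℝ) / ((k:ℝ) - 1) :=
      Real.mul_self_sqrt (le_of_lt (div_pos hkR hk1))
    have h1c : 1 - c = ((k:ℝ) - 1) / (k:ℝ) := by
      rw [hc_def]
      field_simp
    refine ⟨r • w i, ?_, ?_⟩
    · have : ∑ j, (r • w i) j ^ 2 = r * r * ∑ j, w i j * w i j := by
        rw [Finset.mul_sum]
        refine Finset.sum_congr rfl fun j _ => ?_
        show (r * w i j) ^ 2 = _
        ring
      rw [this, hnormw i hai, hr2, h1c]
      field_simp
    · show (r • w i) ⬝ᵥ (A *ᵥ (r • w i)) ≥ (1 + (k:ℝ) * (1 - φ)) / (φ + (k:ℝ) * (1 - φ))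
      rw [Matrix.mulVec_smul, smul_dotProduct, dotProduct_smul]
      have hform : r • (r • ((w i) ⬝ᵥ (A *ᵥ (w i)))) = (r * r) * q i := by
        rw [hq_def]
        show r * (r * _) = _
        ring
      rw [hform, hr2]
      have hq_ge : (k:ℝ) / ((k:ℝ) - 1) * q i ≥ (k:ℝ) / ((k:ℝ) - 1) * (t * (1 - c)) := by
        exact mul_le_mul_of_nonneg_left hqi (le_of_lt (div_pos hkR hk1))
      have ht_eq : (k:ℝ) / ((k:ℝ) - 1) * (t * (1 - c)) = t := by
        rw [h1c]
        field_simp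
      rw [ht_eq] at hq_ge
      exact hq_ge
end
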